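/- Assume K ⊆ B̄_L (the closed ball of radius L centered at 0) and let δ, ε > 0 satisfy ε ≥ 4(1+√d)(L+1)δ. Set c_d = 1/(1+√d), and for k ∈ ℤ^d let Q_ε^k = c_d ε (k + [0,1)^d) and Z_ε = {k ∈ ℤ^d : the closure of Q_ε^k is contained in Ω}. For u ∈ L²(Ω) and k ∈ Z_ε let u^k be the average of u over Q_ε^k ∩ δE. Then Σ_{k ∈ Z_ε} ∫_{Q_ε^k ∩ δE} |u(x) − u^k|² dx ≤ 2^{d−1}(1+√d)^d |K|^{−1} ε² F_{δ,ε}(u). -/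

import Mathlib

open MeasureTheory Filter Metric Set Pointwise
open scoped Topology ENNReal NNReal

noncomputable section

/-- The lattice point of `ℤ^d` inside `ℝ^d`. -/
def lat (d : ℕ) (k : Fin d → ℤ) : EuclideanSpace ℝ (Fin d) := WithLp.toLp 2 (fun i => (k i : ℝ))

/-- The periodic set `E = ⋃_{k ∈ ℤ^d} (k + K)`. -/
def latSet (d : ℕ) (K : Set (EuclideanSpace ℝ (Fin d))) : Set (EuclideanSpace ℝ (Fin d)) :=
  ⋃ k : Fin d → ℤ, (lat d k +ᵥ K)

/-- `K` is compact, the closure of a bounded connected open set, with negligible boundary,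
whose integer translates are pairwise disjoint. -/
def IsAdmissibleK (d : ℕ) (K : Set (EuclideanSpace ℝ (Fin d))) : Prop :=
  (∃ U : Set (EuclideanSpace ℝ (Fin d)),
      IsOpen U ∧ IsConnected U ∧ Bornology.IsBounded U ∧ K = closure U) ∧
  MeasureTheory.volume (frontier K) = 0 ∧
  ∀ k : Fin d → ℤ, k ≠ 0 → Disjoint (lat d k +ᵥ K) K

/-- `φ` is a radial kernel with nonincreasing nonnegative profile `φ₀` and finite
second moment. -/
def IsKernel (d : ℕ) (φ : EuclideanSpace ℝ (Fin d) → ℝ) (φ₀ : ℝ → ℝ) : Prop :=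
  (∀ t, 0 ≤ φ₀ t) ∧ AntitoneOn φ₀ (Set.Ici 0) ∧ (∀ ξ, φ ξ = φ₀ ‖ξ‖) ∧
  MeasureTheory.Integrable (fun ξ : EuclideanSpace ℝ (Fin d) => φ ξ * (1 + ‖ξ‖ ^ 2))

/-- The nonlocal functional `F^φ_{δ,ε}`. -/
def Fphi (d : ℕ) (φ : EuclideanSpace ℝ (Fin d) → ℝ) (Ω K : Set (EuclideanSpace ℝ (Fin d)))
    (δ ε : ℝ) (u : EuclideanSpace ℝ (Fin d) → ℝ) : ℝ :=
  (ε ^ (d + 2))⁻¹ * ∫ x in Ω ∩ δ • latSet d K, ∫ y in Ω ∩ δ • latSet d K,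
    φ (ε⁻¹ • (x - y)) * (u x - u y) ^ 2

/-- The nonlocal functional `F_{δ,ε}` with the truncation kernel `χ_{B₁}`. -/
def Fball (d : ℕ) (Ω K : Set (EuclideanSpace ℝ (Fin d))) (δ ε : ℝ)
    (u : EuclideanSpace ℝ (Fin d) → ℝ) : ℝ :=
  (ε ^ (d + 2))⁻¹ *
    ∫ p in ((Ω ∩ δ • latSet d K) ×ˢ (Ω ∩ δ • latSet d K)) ∩
      {p : EuclideanSpace ℝ (Fin d) × EuclideanSpace ℝ (Fin d) | dist p.1 p.2 < ε},
      (u p.1 - u p.2) ^ 2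

/-- The half-open unit cube `[0,1)^d`. -/
def cube01 (d : ℕ) : Set (EuclideanSpace ℝ (Fin d)) :=
  {x | ∀ i, 0 ≤ x i ∧ x i < 1}

/-- The cube `Q_ε^k = c_d ε (k + [0,1)^d)` with `c_d = (1+√d)⁻¹`. -/
def Qcube (d : ℕ) (ε : ℝ) (k : Fin d → ℤ) : Set (EuclideanSpace ℝ (Fin d)) :=
  ((1 + Real.sqrt d)⁻¹ * ε) • (lat d k +ᵥ cube01 d)

/-!
A cube `Q` of side `r = c_d ε ≥ 4 (L + 1) δ` contains at least `(r / (2δ))^d` whole cells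
`δ (j + K)` with `j ∈ ℤ^d`, so `|Q ∩ δE| ≥ (r / 2)^d |K|`. On a set `A` of finite measure,
`∫∫_{A×A} |u x - u y|² = 2 |A| ∫_A |u - ⨍_A u|²`, which bounds each term of the sum by
`(2 (r / 2)^d |K|)⁻¹ ∫∫_{A×A} |u x - u y|²`. The cubes are disjoint and have diameter at
most `√d r < ε`, so the sets `A × A` are disjoint pieces of the domain of `F_{δ,ε}`.
-/

section Variance

variable {α : Type*} [MeasurableSpace α] {μ : Measure α} [IsFiniteMeasure μ] {u : α → ℝ}

lemma integrable_prod_sub_sq (hu : MemLp u 2 μ) :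
    Integrable (fun p : α × α => (u p.1 - u p.2) ^ 2) (μ.prod μ) :=
  ((hu.comp_fst μ).sub (hu.comp_snd μ)).integrable_sq

lemma integral_prod_sub_sq (hu : MemLp u 2 μ) :
    ∫ p, (u p.1 - u p.2) ^ 2 ∂(μ.prod μ) =
      2 * μ.real univ * ∫ x, (u x - ⨍ y, u y ∂μ) ^ 2 ∂μ := by
  set v : α → ℝ := fun x => u x - ⨍ y, u y ∂μ
  have hv : MemLp v 2 μ := hu.sub (memLp_const _)
  have hv_mean : ∫ x, v x ∂μ = 0 := integral_sub_average μ u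
  have hv1 := (hv.comp_fst μ).integrable_sq
  have hv2 := (hv.comp_snd μ).integrable_sq
  have hv_sq : Integrable (fun p : α × α => v p.1 ^ 2 + v p.2 ^ 2) (μ.prod μ) := hv1.add hv2
  have hv12 := ((hv.integrable one_le_two).mul_prod (hv.integrable one_le_two)).const_mul 2
  calc ∫ p, (u p.1 - u p.2) ^ 2 ∂(μ.prod μ)
      = ∫ p, (v p.1 ^ 2 + v p.2 ^ 2 - 2 * (v p.1 * v p.2)) ∂(μ.prod μ) := by
        congr 1 with p; ring
    _ = 2 * μ.real univ * ∫ x, v x ^ 2 ∂μ := by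
        rw [integral_sub hv_sq hv12, integral_add hv1 hv2, integral_fun_fst (fun x => v x ^ 2),
          integral_fun_snd (fun x => v x ^ 2), integral_const_mul, integral_prod_mul, hv_mean,
          smul_eq_mul]
        ring

end Variance

section CoarsePoincare

open Function

variable {α ι : Type*} [MeasurableSpace α] {μ : Measure α} [SFinite μ] {u : α → ℝ}

lemma setIntegral_sub_setAverage_sq_le {A : Set α} (hA : μ A ≠ ∞)
    (hu : MemLp u 2 (μ.restrict A)) {m : ℝ} (hm : 0 < m) (hmA : ENNReal.ofReal m ≤ μ A) :
    ∫ x in A, (u x - ⨍ y in A, u y ∂μ) ^ 2 ∂μ ≤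
      (2 * m)⁻¹ * ∫ p in A ×ˢ A, (u p.1 - u p.2) ^ 2 ∂(μ.prod μ) := by
  have : IsFiniteMeasure (μ.restrict A) := isFiniteMeasure_restrict.2 hA
  rw [← Measure.prod_restrict, integral_prod_sub_sq hu, measureReal_restrict_apply_univ,
    ← mul_assoc, ← mul_assoc]
  have hmA' : m ≤ μ.real A := (ENNReal.ofReal_le_iff_le_toReal hA).1 hmA
  have hscale : 1 ≤ (2 * m)⁻¹ * 2 * μ.real A := by
    rw [mul_assoc, le_inv_mul_iff₀ (by positivity)]
    linarith
  exact le_mul_of_one_le_left (integral_nonneg fun _ => sq_nonneg _) hscale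

theorem tsum_setIntegral_sub_setAverage_sq_le {Ω : Set α} (hΩ : μ Ω ≠ ∞)
    (hu : MemLp u 2 (μ.restrict Ω)) {A : ι → Set α} (hAm : ∀ i, MeasurableSet (A i))
    (hAΩ : ∀ i, A i ⊆ Ω) (hA : Pairwise (Disjoint on A)) {m : ℝ} (hm : 0 < m)
    (hmA : ∀ i, ENNReal.ofReal m ≤ μ (A i)) {R : Set (α × α)} (hR : R ⊆ Ω ×ˢ Ω)
    (hAR : ∀ i, A i ×ˢ A i ⊆ R) :
    ∑' i, ∫ x in A i, (u x - ⨍ y in A i, u y ∂μ) ^ 2 ∂μ ≤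
      (2 * m)⁻¹ * ∫ p in R, (u p.1 - u p.2) ^ 2 ∂(μ.prod μ) := by
  have : IsFiniteMeasure (μ.restrict Ω) := isFiniteMeasure_restrict.2 hΩ
  have hg : IntegrableOn (fun p : α × α => (u p.1 - u p.2) ^ 2) (Ω ×ˢ Ω) (μ.prod μ) := by
    rw [IntegrableOn, ← Measure.prod_restrict]
    exact integrable_prod_sub_sq hu
  refine Real.tsum_le_of_sum_le (fun i => integral_nonneg fun _ => sq_nonneg _) fun S => ?_
  calc ∑ i ∈ S, ∫ x in A i, (u x - ⨍ y in A i, u y ∂μ) ^ 2 ∂μ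
      ≤ ∑ i ∈ S, (2 * m)⁻¹ * ∫ p in A i ×ˢ A i, (u p.1 - u p.2) ^ 2 ∂(μ.prod μ) :=
        Finset.sum_le_sum fun i _ => setIntegral_sub_setAverage_sq_le
          (measure_ne_top_of_subset (hAΩ i) hΩ)
          (hu.mono_measure (Measure.restrict_mono (hAΩ i) le_rfl)) hm (hmA i)
    _ = (2 * m)⁻¹ * ∫ p in ⋃ i ∈ S, A i ×ˢ A i, (u p.1 - u p.2) ^ 2 ∂(μ.prod μ) := by
        rw [← Finset.mul_sum, integral_biUnion_finset S (fun i _ => (hAm i).prod (hAm i))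
          (fun i _ j _ hij => (hA hij).set_prod_left _ _)
          (fun i _ => hg.mono_set (prod_mono (hAΩ i) (hAΩ i)))]
    _ ≤ (2 * m)⁻¹ * ∫ p in R, (u p.1 - u p.2) ^ 2 ∂(μ.prod μ) := by
        gcongr
        · exact ae_of_all _ fun _ => sq_nonneg _
        · exact hg.mono_set hR
        · exact iUnion₂_subset fun i _ => hAR i

end CoarsePoincare

section Lattice

open Function

variable {d : ℕ}

lemma lat_sub (k l : Fin d → ℤ) : lat d (k - l) = lat d k - lat d l := by
  ext i
  simp [lat]

lemma pairwise_disjoint_lat_vadd {K : Set (EuclideanSpace ℝ (Fin d))}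
    (hK : ∀ k : Fin d → ℤ, k ≠ 0 → Disjoint (lat d k +ᵥ K) K) :
    Pairwise (Disjoint on fun k => lat d k +ᵥ K) := by
  intro k l hkl
  have hkl' := (disjoint_vadd_set (a := lat d l)).2 (hK (k - l) (sub_ne_zero.2 hkl))
  rwa [vadd_vadd, lat_sub, add_sub_cancel] at hkl'

lemma measurableSet_latSet {K : Set (EuclideanSpace ℝ (Fin d))} (hK : MeasurableSet K) :
    MeasurableSet (latSet d K) :=
  MeasurableSet.iUnion fun k => hK.const_vadd (lat d k)

lemma mem_smul_lat_vadd_cube01 {r : ℝ} (hr : 0 < r) (k : Fin d → ℤ)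
    (x : EuclideanSpace ℝ (Fin d)) :
    x ∈ r • (lat d k +ᵥ cube01 d) ↔ ∀ i, r * k i ≤ x i ∧ x i < r * (k i + 1) := by
  rw [mem_smul_set_iff_inv_smul_mem₀ hr.ne', mem_vadd_set_iff_neg_vadd_mem]
  refine forall_congr' fun i => ?_
  simp only [lat, vadd_eq_add, neg_add_eq_sub, PiLp.sub_apply, PiLp.smul_apply, smul_eq_mul,
    sub_nonneg, le_inv_mul_iff₀ hr, sub_lt_iff_lt_add', inv_mul_lt_iff₀ hr]

lemma measurableSet_smul_lat_vadd_cube01 {r : ℝ} (hr : 0 < r) (k : Fin d → ℤ) :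
    MeasurableSet (r • (lat d k +ᵥ cube01 d)) := by
  have hcube : r • (lat d k +ᵥ cube01 d) =
      ⋂ i, (fun x : EuclideanSpace ℝ (Fin d) => x i) ⁻¹' Ico (r * k i) (r * (k i + 1)) := by
    ext x
    simp only [mem_smul_lat_vadd_cube01 hr, mem_iInter, mem_preimage, mem_Ico]
  rw [hcube]
  exact MeasurableSet.iInter fun i =>
    (EuclideanSpace.proj i).continuous.measurable measurableSet_Ico

lemma pairwise_disjoint_smul_lat_vadd_cube01 {r : ℝ} (hr : 0 < r) :
    Pairwise (Disjoint on fun k => r • (lat d k +ᵥ cube01 d)) := by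
  intro k l hkl
  rw [onFun, disjoint_left]
  intro x hxk hxl
  obtain ⟨i, hi⟩ := Function.ne_iff.1 hkl
  obtain ⟨hk₁, hk₂⟩ := (mem_smul_lat_vadd_cube01 hr k x).1 hxk i
  obtain ⟨hl₁, hl₂⟩ := (mem_smul_lat_vadd_cube01 hr l x).1 hxl i
  have hkl₁ : (k i : ℝ) < l i + 1 := lt_of_mul_lt_mul_left (hk₁.trans_lt hl₂) hr.le
  have hkl₂ : (l i : ℝ) < k i + 1 := lt_of_mul_lt_mul_left (hl₁.trans_lt hk₂) hr.le
  norm_cast at hkl₁ hkl₂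
  omega

lemma dist_le_of_mem_smul_lat_vadd_cube01 {r : ℝ} (hr : 0 < r) {k : Fin d → ℤ}
    {x y : EuclideanSpace ℝ (Fin d)} (hx : x ∈ r • (lat d k +ᵥ cube01 d))
    (hy : y ∈ r • (lat d k +ᵥ cube01 d)) :
    dist x y ≤ √d * r := by
  have hcoord : ∀ i, dist (x i) (y i) ≤ r := fun i => by
    have hxi := (mem_smul_lat_vadd_cube01 hr k x).1 hx i
    have hyi := (mem_smul_lat_vadd_cube01 hr k y).1 hy i
    rw [Real.dist_eq, abs_le]
    constructor <;> linarith
  rw [EuclideanSpace.dist_eq, ← Real.sqrt_sq hr.le, ← Real.sqrt_mul (Nat.cast_nonneg _)]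
  refine Real.sqrt_le_sqrt ?_
  calc ∑ i, dist (x i) (y i) ^ 2 ≤ ∑ _i : Fin d, r ^ 2 :=
        Finset.sum_le_sum fun i _ => pow_le_pow_left₀ dist_nonneg (hcoord i) 2
    _ = d * r ^ 2 := by simp

end Lattice

lemma pow_le_card_piFinset_Ico_ceil {ι : Type*} [Fintype ι] [DecidableEq ι] {a b : ι → ℝ}
    {s : ℝ} (hs : 0 ≤ s) (hab : ∀ i, s + 1 ≤ b i - a i) :
    s ^ Fintype.card ι ≤ (Fintype.piFinset fun i => Finset.Ico ⌈a i⌉ ⌈b i⌉).card := by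
  rw [Fintype.card_piFinset, Nat.cast_prod, ← Finset.card_univ, ← Finset.prod_const]
  refine Finset.prod_le_prod (fun _ _ => hs) fun i _ => ?_
  rw [Int.card_Ico]
  calc s ≤ ((⌈b i⌉ - ⌈a i⌉ : ℤ) : ℝ) := by
        push_cast
        linarith [hab i, Int.le_ceil (b i), Int.ceil_lt_add_one (a i)]
    _ ≤ _ := by exact_mod_cast Int.self_le_toNat _

section Counting

variable {d : ℕ} {K : Set (EuclideanSpace ℝ (Fin d))} {L δ r : ℝ}

lemma smul_lat_vadd_subset_smul_lat_vadd_cube01 (hKL : K ⊆ closedBall 0 L) (hδ : 0 < δ)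
    (hr : 0 < r) {j k : Fin d → ℤ}
    (hj : j ∈ Fintype.piFinset fun i =>
      Finset.Ico ⌈r * k i / δ + L⌉ ⌈r * (k i + 1) / δ - L⌉) :
    δ • (lat d j +ᵥ K) ⊆ r • (lat d k +ᵥ cube01 d) := by
  rintro _ ⟨_, ⟨z, hz, rfl⟩, rfl⟩
  rw [mem_smul_lat_vadd_cube01 hr]
  intro i
  obtain ⟨hj₁, hj₂⟩ := Finset.mem_Ico.1 (Fintype.mem_piFinset.1 hj i)
  have hlow := (div_le_iff₀' hδ).1 (le_sub_iff_add_le.2 (Int.ceil_le.1 hj₁))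
  have hupp := (lt_div_iff₀' hδ).1 (add_lt_of_lt_sub_right (Int.lt_ceil.1 hj₂))
  obtain ⟨hzi₁, hzi₂⟩ :=
    abs_le.1 ((PiLp.norm_apply_le z i).trans (mem_closedBall_zero_iff.1 (hKL hz)))
  have hcoord : (δ • (lat d j +ᵥ z)) i = δ * j i + δ * z i := by simp [lat]
  rw [hcoord]
  constructor <;> nlinarith

theorem le_volume_smul_lat_vadd_cube01_inter_smul_latSet (hKm : MeasurableSet K)
    (hK : ∀ k : Fin d → ℤ, k ≠ 0 → Disjoint (lat d k +ᵥ K) K)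
    (hKL : K ⊆ closedBall 0 L) (hL : 0 ≤ L) (hδ : 0 < δ) (hrL : 4 * (L + 1) * δ ≤ r)
    (k : Fin d → ℤ) :
    ENNReal.ofReal ((r / 2) ^ d * volume.real K) ≤
      volume (r • (lat d k +ᵥ cube01 d) ∩ δ • latSet d K) := by
  have hr : 0 < r := lt_of_lt_of_le (by positivity) hrL
  rw [ENNReal.ofReal_mul (by positivity), measureReal_def,
    ENNReal.ofReal_toReal (isBounded_closedBall.subset hKL).measure_lt_top.ne]
  have hside : 2 * (L + 1) ≤ r / (2 * δ) := by
    rw [le_div_iff₀ (by positivity)]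
    linarith
  set J := Fintype.piFinset fun i => Finset.Ico ⌈r * k i / δ + L⌉ ⌈r * (k i + 1) / δ - L⌉
  have hJcard : (r / (2 * δ)) ^ d ≤ J.card := by
    have hwidth : ∀ i, r / (2 * δ) + 1 ≤ r * (k i + 1) / δ - L - (r * k i / δ + L) := by
      intro i
      have hsplit : r * (k i + 1) / δ - L - (r * k i / δ + L) = 2 * (r / (2 * δ)) - 2 * L := by
        field_simp
        ring
      linarith
    simpa only [Fintype.card_fin] using pow_le_card_piFinset_Ico_ceil (by positivity) hwidth
  have hJsub : ∀ j ∈ J,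
      δ • (lat d j +ᵥ K) ⊆ r • (lat d k +ᵥ cube01 d) ∩ δ • latSet d K := fun j hj =>
    subset_inter (smul_lat_vadd_subset_smul_lat_vadd_cube01 hKL hδ hr hj)
      (smul_set_mono (subset_iUnion (fun l => lat d l +ᵥ K) j))
  have hcell : ∀ j, volume (δ • (lat d j +ᵥ K)) = ENNReal.ofReal (δ ^ d) * volume K := by
    intro j
    rw [Measure.addHaar_smul, measure_vadd, finrank_euclideanSpace_fin, abs_of_pos (pow_pos hδ d)]
  have hdisj : (J : Set (Fin d → ℤ)).PairwiseDisjoint fun j => δ • (lat d j +ᵥ K) :=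
    fun j _ l _ hjl => (disjoint_image_iff (smul_right_injective _ hδ.ne')).2
      (pairwise_disjoint_lat_vadd hK hjl)
  calc ENNReal.ofReal ((r / 2) ^ d) * volume K
      = ENNReal.ofReal ((r / (2 * δ)) ^ d) * (ENNReal.ofReal (δ ^ d) * volume K) := by
        rw [← mul_assoc, ← ENNReal.ofReal_mul (by positivity), ← mul_pow]
        congr 3
        field_simp
    _ ≤ J.card * (ENNReal.ofReal (δ ^ d) * volume K) := by
        gcongr
        rw [← ENNReal.ofReal_natCast]
        exact ENNReal.ofReal_le_ofReal hJcard
    _ = ∑ j ∈ J, volume (δ • (lat d j +ᵥ K)) := by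
        simp only [hcell, Finset.sum_const, nsmul_eq_mul]
    _ = volume (⋃ j ∈ J, δ • (lat d j +ᵥ K)) :=
        (measure_biUnion_finset hdisj fun j _ =>
          (hKm.const_vadd (lat d j)).const_smul₀ δ).symm
    _ ≤ volume (r • (lat d k +ᵥ cube01 d) ∩ δ • latSet d K) :=
        measure_mono (iUnion₂_subset hJsub)

end Counting

lemma IsAdmissibleK.measurableSet {d : ℕ} {K : Set (EuclideanSpace ℝ (Fin d))}
    (hK : IsAdmissibleK d K) : MeasurableSet K := by
  obtain ⟨⟨U, -, -, -, rfl⟩, -⟩ := hK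
  exact isClosed_closure.measurableSet

lemma IsAdmissibleK.volume_pos {d : ℕ} {K : Set (EuclideanSpace ℝ (Fin d))}
    (hK : IsAdmissibleK d K) : 0 < volume K := by
  obtain ⟨⟨U, hUo, hUconn, -, rfl⟩, -⟩ := hK
  exact (hUo.measure_pos volume hUconn.nonempty).trans_le (measure_mono subset_closure)

section Qcube

variable {d : ℕ} {ε : ℝ}

lemma dist_lt_of_mem_Qcube (hε : 0 < ε) {k : Fin d → ℤ} {x y : EuclideanSpace ℝ (Fin d)}
    (hx : x ∈ Qcube d ε k) (hy : y ∈ Qcube d ε k) : dist x y < ε := by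
  have hd : √d * (1 + √d)⁻¹ < 1 := by
    rw [mul_inv_lt_iff₀ (by positivity)]
    linarith
  calc dist x y ≤ √d * ((1 + √d)⁻¹ * ε) :=
        dist_le_of_mem_smul_lat_vadd_cube01 (by positivity) hx hy
    _ = √d * (1 + √d)⁻¹ * ε := by ring
    _ < ε := mul_lt_of_lt_one_left hε hd

lemma le_volume_Qcube_inter_smul_latSet {K : Set (EuclideanSpace ℝ (Fin d))}
    (hK : IsAdmissibleK d K) {L δ : ℝ} (hKL : K ⊆ closedBall 0 L) (hL : 0 ≤ L) (hδ : 0 < δ)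
    (hε : 4 * (1 + √d) * (L + 1) * δ ≤ ε) (k : Fin d → ℤ) :
    ENNReal.ofReal (((1 + √d)⁻¹ * ε / 2) ^ d * volume.real K) ≤
      volume (Qcube d ε k ∩ δ • latSet d K) := by
  refine le_volume_smul_lat_vadd_cube01_inter_smul_latSet hK.measurableSet hK.2.2 hKL hL hδ ?_ k
  rw [le_inv_mul_iff₀ (by positivity)]
  linarith

end Qcube

theorem stmt_9_general (d : ℕ)
    (K : Set (EuclideanSpace ℝ (Fin d))) (hK : IsAdmissibleK d K)
    (Ω : Set (EuclideanSpace ℝ (Fin d))) (hΩb : Bornology.IsBounded Ω)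
    (L : ℝ) (hKL : K ⊆ Metric.closedBall 0 L)
    (δ ε : ℝ) (hδ : 0 < δ) (hε : 4 * (1 + Real.sqrt d) * (L + 1) * δ ≤ ε)
    (u : EuclideanSpace ℝ (Fin d) → ℝ) (hu : MemLp u 2 (volume.restrict Ω)) :
    ∑' k : {k : Fin d → ℤ // closure (Qcube d ε k) ⊆ Ω},
        ∫ x in Qcube d ε k.1 ∩ δ • latSet d K,
          (u x - ⨍ y in Qcube d ε k.1 ∩ δ • latSet d K, u y) ^ 2
      ≤ (2:ℝ) ^ ((d:ℤ) - 1) * (1 + Real.sqrt d) ^ d * ((volume K).toReal)⁻¹ * ε ^ 2 *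
          Fball d Ω K δ ε u := by
  have hL : 0 ≤ L :=
    nonempty_closedBall.1 ((nonempty_of_measure_ne_zero hK.volume_pos.ne').mono hKL)
  have hε0 : 0 < ε := lt_of_lt_of_le (by positivity) hε
  have hr : 0 < (1 + √d)⁻¹ * ε := by positivity
  have hKpos : 0 < volume.real K := ENNReal.toReal_pos hK.volume_pos.ne'
    (isBounded_closedBall.subset hKL).measure_lt_top.ne
  set A := fun k : {k : Fin d → ℤ // closure (Qcube d ε k) ⊆ Ω} =>
    Qcube d ε k.1 ∩ δ • latSet d K
  have hAΩ : ∀ k, A k ⊆ Ω := fun k x hx => k.2 (subset_closure hx.1)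
  have hA : Pairwise (Function.onFun Disjoint A) :=
    (pairwise_disjoint_smul_lat_vadd_cube01 hr).comp_of_injective Subtype.val_injective
      |>.mono fun _ _ h => h.mono inter_subset_left inter_subset_left
  set R := ((Ω ∩ δ • latSet d K) ×ˢ (Ω ∩ δ • latSet d K)) ∩
    {p : EuclideanSpace ℝ (Fin d) × EuclideanSpace ℝ (Fin d) | dist p.1 p.2 < ε}
  have hAR : ∀ k, A k ×ˢ A k ⊆ R := fun k p hp =>
    ⟨⟨⟨hAΩ k hp.1, hp.1.2⟩, hAΩ k hp.2, hp.2.2⟩,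
      dist_lt_of_mem_Qcube hε0 hp.1.1 hp.2.1⟩
  have hconst : (2 * (((1 + √d)⁻¹ * ε / 2) ^ d * volume.real K))⁻¹ =
      (2:ℝ) ^ ((d:ℤ) - 1) * (1 + √d) ^ d * (volume.real K)⁻¹ * ε ^ 2 *
        (ε ^ (d + 2))⁻¹ := by
    rw [zpow_sub₀ two_ne_zero, zpow_natCast, zpow_one, div_pow, mul_pow, inv_pow]
    field_simp
    ring
  refine (tsum_setIntegral_sub_setAverage_sq_le (A := A) hΩb.measure_lt_top.ne hu
    (fun k => (measurableSet_smul_lat_vadd_cube01 hr k.1).inter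
      ((measurableSet_latSet hK.measurableSet).const_smul₀ δ))
    hAΩ hA (by positivity) (fun k => le_volume_Qcube_inter_smul_latSet hK hKL hL hδ hε k.1)
    (fun p hp => ⟨hp.1.1.1, hp.1.2.1⟩) hAR).trans_eq ?_
  rw [hconst, Fball, Measure.volume_eq_prod, measureReal_def]
  ring

/-- Poincaré-type estimate for the coarse-grained averages. -/
theorem stmt_9 (d : ℕ) (hd : 1 ≤ d)
    (K : Set (EuclideanSpace ℝ (Fin d))) (hK : IsAdmissibleK d K)
    (Ω : Set (EuclideanSpace ℝ (Fin d))) (hΩo : IsOpen Ω) (hΩb : Bornology.IsBounded Ω)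
    (L : ℝ) (hKL : K ⊆ Metric.closedBall 0 L)
    (δ ε : ℝ) (hδ : 0 < δ) (hε : 4 * (1 + Real.sqrt d) * (L + 1) * δ ≤ ε)
    (u : EuclideanSpace ℝ (Fin d) → ℝ) (hu : MemLp u 2 (volume.restrict Ω)) :
    ∑' k : {k : Fin d → ℤ // closure (Qcube d ε k) ⊆ Ω},
        ∫ x in Qcube d ε k.1 ∩ δ • latSet d K,
          (u x - ⨍ y in Qcube d ε k.1 ∩ δ • latSet d K, u y) ^ 2
      ≤ (2:ℝ) ^ ((d:ℤ) - 1) * (1 + Real.sqrt d) ^ d * ((volume K).toReal)⁻¹ * ε ^ 2 *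
          Fball d Ω K δ ε u :=
  stmt_9_general d K hK Ω hΩb L hKL δ ε hδ hε u hu
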